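/- Let C be an inductively pierced neural code on n neurons. For any two piercing orders of C and for all k and v, the number of k-piercings in the first order equals the number of k-piercings in the second order, and the number of k-piercings contained in exactly v other place fields (i.e., with |σ| = v) in the first order equals the corresponding number in the second order. That is, the piercing numbers j_k and j_{k,v} are invariants of the code, independent of the choice of piercing order. -/

import Mathlib

open MvPolynomial Finset

noncomputable section NeuralCore

/-- The field with two elements. -/
abbrev F2 : Type := ZMod 2

/-- The variables of the polarized ring `S = F2[x_1,…,x_n,y_1,…,y_n]`:
`Sum.inl i` is `x_i` and `Sum.inr i` is `y_i`. -/
abbrev SV (n : ℕ) : Type := Fin n ⊕ Fin n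

/-- The polarized polynomial ring `S = F2[x_1,…,x_n,y_1,…,y_n]`. -/
abbrev PolyS (n : ℕ) : Type := MvPolynomial (SV n) F2

/-- The polynomial ring `R = F2[x_1,…,x_n]`. -/
abbrev PolyR (n : ℕ) : Type := MvPolynomial (Fin n) F2

/-- The pseudo-monomial `∏_{i ∈ σ} x_i ∏_{j ∈ τ} (1 - x_j)`. -/
def pseudoMonomial {n : ℕ} (σ τ : Finset (Fin n)) : PolyR n :=
  (∏ i ∈ σ, X i) * ∏ j ∈ τ, (1 - X j)

/-- A polynomial of `R` is a pseudo-monomial if it has the form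
`∏_{i ∈ σ} x_i ∏_{j ∈ τ} (1 - x_j)` with `σ ∩ τ = ∅`. -/
def IsPseudoMonomial {n : ℕ} (f : PolyR n) : Prop :=
  ∃ σ τ : Finset (Fin n), Disjoint σ τ ∧ f = pseudoMonomial σ τ

/-- `ρ_v = ∏_{i ∈ v} x_i ∏_{j ∉ v} (1 - x_j)`. -/
def rhoPoly {n : ℕ} (v : Finset (Fin n)) : PolyR n := pseudoMonomial v vᶜ

/-- The neural ideal `L = (ρ_v : v ∉ C)` of a neural code `C ⊆ 2^[n]`. -/
def neuralIdeal {n : ℕ} (C : Finset (Finset (Fin n))) : Ideal (PolyR n) :=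
  Ideal.span {f | ∃ v : Finset (Fin n), v ∉ C ∧ f = rhoPoly v}

/-- The canonical form `CF(C)`: the pseudo-monomials of the neural ideal divisible by
no other pseudo-monomial of the neural ideal. -/
def canonicalForm {n : ℕ} (C : Finset (Finset (Fin n))) : Set (PolyR n) :=
  {f | IsPseudoMonomial f ∧ f ∈ neuralIdeal C ∧
    ∀ g : PolyR n, IsPseudoMonomial g → g ∈ neuralIdeal C → g ∣ f → g = f}

/-- The polarization `∏_{i ∈ σ} x_i ∏_{j ∈ τ} y_j ∈ S` of the pseudo-monomial
determined by the pair `(σ, τ)`. -/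
def polarize {n : ℕ} (σ τ : Finset (Fin n)) : PolyS n :=
  (∏ i ∈ σ, X (Sum.inl i)) * ∏ j ∈ τ, X (Sum.inr j)

/-- The set of polarizations of the elements of the canonical form of `C`. -/
def polarizedCanonicalForm {n : ℕ} (C : Finset (Finset (Fin n))) : Set (PolyS n) :=
  {m | ∃ σ τ : Finset (Fin n), Disjoint σ τ ∧
    pseudoMonomial σ τ ∈ canonicalForm C ∧ m = polarize σ τ}

/-- The polarized neural ideal `J ⊆ S` of a neural code `C`. -/
def polarizedNeuralIdeal {n : ℕ} (C : Finset (Finset (Fin n))) : Ideal (PolyS n) :=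
  Ideal.span (polarizedCanonicalForm C)

/-- The deletion `C ∖ i` of neuron `i` from the code `C`. -/
def deleteNeuron {n : ℕ} (C : Finset (Finset (Fin n))) (i : Fin n) :
    Finset (Finset (Fin n)) :=
  C.image (fun c => c.erase i)

/-- Deletion of a set of neurons from the code `C`. -/
def deleteSet {n : ℕ} (C : Finset (Finset (Fin n))) (s : Finset (Fin n)) :
    Finset (Finset (Fin n)) :=
  C.image (fun c => c \ s)

/-- The interval `[σ, τ] = {γ : σ ⊆ γ ⊆ τ}`. -/
def codeInterval {n : ℕ} (σ τ : Finset (Fin n)) : Finset (Finset (Fin n)) :=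
  τ.powerset.filter (fun γ => σ ⊆ γ)

/-- Neuron `i` is a piercing of `C ∖ i` with piercing data `σ ⊆ τ ⊆ [n] ∖ {i}`:
`[σ,τ] ⊆ C∖i` and `C = (C∖i) ∪ [σ ∪ {i}, τ ∪ {i}]`. -/
def IsPiercingWith {n : ℕ} (C : Finset (Finset (Fin n))) (i : Fin n)
    (σ τ : Finset (Fin n)) : Prop :=
  σ ⊆ τ ∧ i ∉ τ ∧ codeInterval σ τ ⊆ deleteNeuron C i ∧
    C = deleteNeuron C i ∪ codeInterval (insert i σ) (insert i τ)

/-- Neuron `i` is a `k`-piercing of `C ∖ i`. -/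
def IsPiercing {n : ℕ} (C : Finset (Finset (Fin n))) (i : Fin n) (k : ℕ) : Prop :=
  ∃ σ τ : Finset (Fin n), IsPiercingWith C i σ τ ∧ τ.card = σ.card + k

/-- A code is inductively pierced if it is `{∅}` or some neuron is a `k`-piercing of the
code with it deleted, and the deleted code is inductively pierced. -/
inductive InductivelyPierced {n : ℕ} : Finset (Finset (Fin n)) → Prop
  | base : InductivelyPierced {∅}
  | step (C : Finset (Finset (Fin n))) (i : Fin n) (k : ℕ) :
      IsPiercing C i k → InductivelyPierced (deleteNeuron C i) → InductivelyPierced C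

/-- A piercing order for the code `C`: an ordering `ord 0, ord 1, …, ord (n-1)` of the
neurons together with piercing data `(sig j, tau j)` such that each `ord j` is a
piercing of the code obtained from `C` by deleting the later neurons. -/
structure PiercingOrder {n : ℕ} (C : Finset (Finset (Fin n))) where
  ord : Fin n ≃ Fin n
  sig : Fin n → Finset (Fin n)
  tau : Fin n → Finset (Fin n)
  piercing : ∀ j : Fin n,
    IsPiercingWith
      (deleteSet C (Finset.univ.filter (fun i => ∃ m : Fin n, j < m ∧ ord m = i)))
      (ord j) (sig j) (tau j)

/-- The rank of the piercing at step `j` of a piercing order. -/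
def PiercingOrder.kOf {n : ℕ} {C : Finset (Finset (Fin n))} (P : PiercingOrder C)
    (j : Fin n) : ℕ :=
  (P.tau j).card - (P.sig j).card

/-- `j_k`: the number of `k`-piercings in a piercing order. -/
def PiercingOrder.jnum {n : ℕ} {C : Finset (Finset (Fin n))} (P : PiercingOrder C)
    (k : ℕ) : ℕ :=
  (Finset.univ.filter (fun j : Fin n => P.kOf j = k)).card

/-- `j_{k,v}`: the number of `k`-piercings contained in exactly `v` other place fields
(`|σ| = v`) in a piercing order. -/
def PiercingOrder.jnum2 {n : ℕ} {C : Finset (Finset (Fin n))} (P : PiercingOrder C)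
    (k v : ℕ) : ℕ :=
  (Finset.univ.filter (fun j : Fin n => P.kOf j = k ∧ (P.sig j).card = v)).card

/-- The piercing ideal `p_i = (x_j : j ∈ [n]∖({i} ∪ τ)) + (y_j : j ∈ σ)`. -/
def piercingIdeal {n : ℕ} (i : Fin n) (σ τ : Finset (Fin n)) : Ideal (PolyS n) :=
  Ideal.span ({m | ∃ j : Fin n, j ≠ i ∧ j ∉ τ ∧ m = X (Sum.inl j)} ∪
    {m | ∃ j ∈ σ, m = X (Sum.inr j)})

/-! ### Multigraded structure on `S` -/

/-- The multidegree `(u, v)` of an exponent vector: total degree in the `x`'s and in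
the `y`'s, where `deg x_i = (1,0)` and `deg y_i = (0,1)`. -/
def mdeg {n : ℕ} (d : SV n →₀ ℕ) : ℕ × ℕ :=
  (∑ i : Fin n, d (Sum.inl i), ∑ i : Fin n, d (Sum.inr i))

/-- The total degree of an exponent vector in the standard grading. -/
def sdeg {n : ℕ} (d : SV n →₀ ℕ) : ℕ := ∑ v : SV n, d v

/-- The multidegree of a squarefree set of variables. -/
def tdegT {n : ℕ} (T : Finset (SV n)) : ℕ × ℕ :=
  ((T.filter (fun v => v.isLeft = true)).card, (T.filter (fun v => v.isLeft ≠ true)).card)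

/-- The multidegree-`(u,v)` homogeneous component of `S`, as an `F2`-subspace. -/
def homogComp (n : ℕ) (uv : ℕ × ℕ) : Submodule F2 (PolyS n) where
  carrier := {f | ∀ d ∈ f.support, mdeg d = uv}
  add_mem' := by
    intro a b ha hb d hd
    rcases Finset.mem_union.mp (MvPolynomial.support_add hd) with h | h
    · exact ha d h
    · exact hb d h
  zero_mem' := by intro d hd; simp at hd
  smul_mem' := by
    intro c f hf d hd
    exact hf d (MvPolynomial.support_smul hd)

/-- The degree-`i` homogeneous component of `S` in the standard grading. -/
def homogComp1 (n : ℕ) (i : ℕ) : Submodule F2 (PolyS n) where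
  carrier := {f | ∀ d ∈ f.support, sdeg d = i}
  add_mem' := by
    intro a b ha hb d hd
    rcases Finset.mem_union.mp (MvPolynomial.support_add hd) with h | h
    · exact ha d h
    · exact hb d h
  zero_mem' := by intro d hd; simp at hd
  smul_mem' := by
    intro c f hf d hd
    exact hf d (MvPolynomial.support_smul hd)

/-! ### Koszul complex computing `Tor^S_•(M, F2)` and Betti numbers

`Tor^S_w(M, F2)` is computed as the `w`-th homology of `K ⊗_S M` where `K` is the
Koszul resolution of `F2 = S/(x_1,…,y_n)` on the `2n` variables.  (Over `F2` no signs
are needed.)  Graded and multigraded Betti numbers are the dimensions of the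
corresponding graded components. -/

section Koszul

variable (n : ℕ) (M : Type) [AddCommGroup M] [Module (PolyS n) M]
  [Module F2 M] [IsScalarTower F2 (PolyS n) M]

/-- Basis indices in homological degree `w` of the Koszul complex: `w`-subsets of the
variables. -/
abbrev KIdx (w : ℕ) : Type := {T : Finset (SV n) // T.card = w}

/-- Homological degree `w` of `K ⊗_S M`. -/
abbrev kC (w : ℕ) : Type := KIdx n w → M

/-- The Koszul differential `(K ⊗_S M)_{w+1} → (K ⊗_S M)_w` (over `F2`, signs are
irrelevant): `d f T = ∑_{i ∉ T} x_i • f (T ∪ {i})`. -/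
def kd (w : ℕ) : kC n M (w + 1) →ₗ[PolyS n] kC n M w where
  toFun f T := ∑ i ∈ T.1ᶜ.attach,
    (X i.1 : PolyS n) • f ⟨insert i.1 T.1, by
      rw [Finset.card_insert_of_notMem (Finset.mem_compl.mp i.2), T.2]⟩
  map_add' f g := by
    funext T
    simp [Pi.add_apply, smul_add, Finset.sum_add_distrib]
  map_smul' c f := by
    funext T
    simp only [Pi.smul_apply, RingHom.id_apply, Finset.smul_sum]
    exact Finset.sum_congr rfl (fun i _ => smul_comm _ _ _)

/-- The cycles of `K ⊗_S M` in homological degree `w`. -/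
def kcycles : (w : ℕ) → Submodule (PolyS n) (kC n M w)
  | 0 => ⊤
  | (w + 1) => LinearMap.ker (kd n M w)

/-- The boundaries of `K ⊗_S M` in homological degree `w`. -/
def kboundaries (w : ℕ) : Submodule (PolyS n) (kC n M w) :=
  LinearMap.range (kd n M w)

/-- The `w`-th homology of `K ⊗_S M`, i.e. `Tor^S_w(M, F2)`. -/
def kHomology (w : ℕ) : Type :=
  ↥(kcycles n M w) ⧸ ((kboundaries n M w).comap (kcycles n M w).subtype)

instance (w : ℕ) : AddCommGroup (kHomology n M w) := by
  unfold kHomology; infer_instance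

instance (w : ℕ) : Module (PolyS n) (kHomology n M w) := by
  unfold kHomology; infer_instance

instance (w : ℕ) : Module F2 (kHomology n M w) := by
  unfold kHomology; infer_instance

/-- The (total) Betti number `β_w(M) = dim_{F2} Tor^S_w(M, F2)`. -/
def bettiNum (w : ℕ) : ℕ := Module.finrank F2 (kHomology n M w)

/-- Shifted graded component: the degree `uv - t` component of a multigraded module
with components `g`, interpreted as `⊥` when `t ≰ uv`. -/
def shiftComp (g : ℕ × ℕ → Submodule F2 M) (uv t : ℕ × ℕ) : Submodule F2 M :=
  if t.1 ≤ uv.1 ∧ t.2 ≤ uv.2 then g (uv.1 - t.1, uv.2 - t.2) else ⊥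

/-- The multidegree-`uv` component of `(K ⊗_S M)_w`, for a module `M` whose
multigrading is given by `g`; the basis element `e_T` has multidegree `tdegT T`. -/
def gradedKC (g : ℕ × ℕ → Submodule F2 M) (w : ℕ) (uv : ℕ × ℕ) :
    Submodule F2 (kC n M w) :=
  Submodule.pi Set.univ (fun T : KIdx n w => shiftComp (M := M) g uv (tdegT T.1))

/-- The multigraded Betti number `β_{w,u,v}(M) = dim_{F2} Tor^S_w(M, F2)_{(u,v)}`:
the dimension of the `(u,v)`-component of the `w`-th Koszul homology. -/
def bettiNumM (g : ℕ × ℕ → Submodule F2 M) (w : ℕ) (uv : ℕ × ℕ) : ℕ :=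
  Module.finrank F2
      ↥(gradedKC n M g w uv ⊓ (kcycles n M w).restrictScalars F2) -
    Module.finrank F2
      ↥(gradedKC n M g w uv ⊓ (kcycles n M w).restrictScalars F2 ⊓
        (kboundaries n M w).restrictScalars F2)

/-- The degree-`i` component of `(K ⊗_S M)_w` in the standard grading, for a module
`M` whose grading is given by `g1`; each basis element `e_T` has degree `w`. -/
def gradedKC1 (g1 : ℕ → Submodule F2 M) (w i : ℕ) : Submodule F2 (kC n M w) :=
  Submodule.pi Set.univ
    (fun _ : KIdx n w => if w ≤ i then g1 (i - w) else (⊥ : Submodule F2 M))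

/-- The graded Betti number `β_{w,i}(M) = dim_{F2} Tor^S_w(M, F2)_i` in the standard
grading. -/
def bettiNumGr (g1 : ℕ → Submodule F2 M) (w i : ℕ) : ℕ :=
  Module.finrank F2
      ↥(gradedKC1 n M g1 w i ⊓ (kcycles n M w).restrictScalars F2) -
    Module.finrank F2
      ↥(gradedKC1 n M g1 w i ⊓ (kcycles n M w).restrictScalars F2 ⊓
        (kboundaries n M w).restrictScalars F2)

end Koszul

/-! ### Betti numbers of quotients `S/J` and of ideals `J` -/

/-- The multigrading on `S ⧸ J` induced from `S` (for homogeneous `J`). -/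
def quotGradingM {n : ℕ} (J : Ideal (PolyS n)) (uv : ℕ × ℕ) :
    Submodule F2 (PolyS n ⧸ J) :=
  (homogComp n uv).map (Ideal.Quotient.mkₐ F2 J).toLinearMap

/-- The standard grading on `S ⧸ J` induced from `S` (for homogeneous `J`). -/
def quotGrading1 {n : ℕ} (J : Ideal (PolyS n)) (i : ℕ) :
    Submodule F2 (PolyS n ⧸ J) :=
  (homogComp1 n i).map (Ideal.Quotient.mkₐ F2 J).toLinearMap

/-- The standard grading on an ideal `J ⊆ S` viewed as an `S`-module. -/
def idealGrading1 {n : ℕ} (J : Ideal (PolyS n)) (i : ℕ) : Submodule F2 ↥J :=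
  (homogComp1 n i).comap ((J.subtype).restrictScalars F2)

/-- `β_w(S/J)`. -/
def quotBetti {n : ℕ} (J : Ideal (PolyS n)) (w : ℕ) : ℕ :=
  bettiNum n (PolyS n ⧸ J) w

/-- The graded Betti number `β_{w,i}(S/J)`. -/
def quotBettiGr {n : ℕ} (J : Ideal (PolyS n)) (w i : ℕ) : ℕ :=
  bettiNumGr n (PolyS n ⧸ J) (quotGrading1 J) w i

/-- The multigraded Betti number `β_{w,u,v}(S/J)`. -/
def quotBettiM {n : ℕ} (J : Ideal (PolyS n)) (w : ℕ) (uv : ℕ × ℕ) : ℕ :=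
  bettiNumM n (PolyS n ⧸ J) (quotGradingM J) w uv

/-- The graded Betti number `β_{w,i}(J)` of an ideal viewed as an `S`-module. -/
def idealBettiGr {n : ℕ} (J : Ideal (PolyS n)) (w i : ℕ) : ℕ :=
  bettiNumGr n ↥J (idealGrading1 J) w i

/-- The Castelnuovo–Mumford regularity of the ideal `J`:
`reg J = max { i - w : β_{w,i}(J) ≠ 0 }`. -/
def idealRegularity {n : ℕ} (J : Ideal (PolyS n)) : ℕ :=
  sSup {r : ℕ | ∃ w i : ℕ, idealBettiGr J w i ≠ 0 ∧ i = w + r}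

/-- The projective dimension of `S/J`: the largest `w` with `β_w(S/J) ≠ 0`. -/
def quotPdim {n : ℕ} (J : Ideal (PolyS n)) : ℕ :=
  sSup {w : ℕ | quotBetti J w ≠ 0}

/-- Integer binomial coefficient with the convention `binom a b = 0` unless
`0 ≤ b ≤ a`. -/
def binom (a b : ℤ) : ℤ :=
  if 0 ≤ a ∧ 0 ≤ b then ((a.toNat).choose b.toNat : ℤ) else 0

end NeuralCore

/-! Deleting a piercing neuron `i` keeps every other piercing `i'` a piercing, with `τ'` shrunk
to `τ' ∖ {i}`; and if `i ∈ τ'` then also `i' ∈ τ`, with `σ = σ'` and `|τ| = |τ'|`. Hence removing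
`i` and then `i'`, or `i'` and then `i`, records the same two pairs `(|τ| - |σ|, |σ|)`, and by
induction on the code every sequence of piercings building it records the same multiset of
pairs. -/

section PiercingInvariance

variable {n : ℕ} {C : Finset (Finset (Fin n))} {i i' : Fin n} {σ τ σ' τ' c : Finset (Fin n)}

lemma mem_codeInterval : c ∈ codeInterval σ τ ↔ σ ⊆ c ∧ c ⊆ τ := by
  simp [codeInterval, and_comm]

lemma mem_deleteNeuron : c ∈ deleteNeuron C i ↔ ∃ d ∈ C, d.erase i = c := by
  simp [deleteNeuron]

lemma notMem_of_mem_deleteNeuron (hc : c ∈ deleteNeuron C i) : i ∉ c := by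
  obtain ⟨d, -, rfl⟩ := mem_deleteNeuron.mp hc
  exact notMem_erase i d

lemma mem_deleteNeuron_iff_of_subset (hC : deleteNeuron C i ⊆ C) :
    c ∈ deleteNeuron C i ↔ c ∈ C ∧ i ∉ c :=
  ⟨fun hc => ⟨hC hc, notMem_of_mem_deleteNeuron hc⟩,
    fun ⟨hc, hi⟩ => mem_deleteNeuron.mpr ⟨c, hc, erase_eq_of_notMem hi⟩⟩

lemma deleteNeuron_comm (C : Finset (Finset (Fin n))) (i j : Fin n) :
    deleteNeuron (deleteNeuron C i) j = deleteNeuron (deleteNeuron C j) i := by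
  simp only [deleteNeuron, image_image, Function.comp_def, erase_right_comm]

lemma deleteNeuron_deleteSet (C : Finset (Finset (Fin n))) (s : Finset (Fin n)) (i : Fin n) :
    deleteNeuron (deleteSet C s) i = deleteSet C (insert i s) := by
  simp only [deleteNeuron, deleteSet, image_image, Function.comp_def, sdiff_insert]

lemma deleteSet_empty (C : Finset (Finset (Fin n))) : deleteSet C ∅ = C := by
  simp [deleteSet]

lemma deleteSet_univ (hC : C.Nonempty) : deleteSet C univ = {∅} := by
  simp only [deleteSet, sdiff_eq_empty_iff_subset.mpr (subset_univ _), image_const hC]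

/-- The clause `[σ, τ] ⊆ C ∖ i` is dropped: each `γ ∈ [σ, τ]` is `(γ ∪ {i}) ∖ i`. -/
lemma isPiercingWith_iff : IsPiercingWith C i σ τ ↔ σ ⊆ τ ∧ i ∉ τ ∧ deleteNeuron C i ⊆ C ∧
    ∀ c, i ∈ c → (c ∈ C ↔ insert i σ ⊆ c ∧ c ⊆ insert i τ) := by
  constructor
  · rintro ⟨hστ, hiτ, -, hC⟩
    refine ⟨hστ, hiτ, fun c hc => by rw [hC]; exact mem_union_left _ hc, fun c hic => ?_⟩
    conv_lhs => rw [hC]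
    rw [mem_union, mem_codeInterval]
    exact or_iff_right fun hc => notMem_of_mem_deleteNeuron hc hic
  · rintro ⟨hστ, hiτ, hdel, hmem⟩
    refine ⟨hστ, hiτ, fun γ hγ => ?_, ?_⟩
    · obtain ⟨hσγ, hγτ⟩ := mem_codeInterval.mp hγ
      have hiγ : i ∉ γ := fun h => hiτ (hγτ h)
      have hγ' : insert i γ ∈ C := (hmem _ (mem_insert_self i γ)).mpr
        ⟨insert_subset_insert i hσγ, insert_subset_insert i hγτ⟩
      exact mem_deleteNeuron.mpr ⟨_, hγ', erase_insert hiγ⟩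
    · ext c
      rw [mem_union, mem_codeInterval, mem_deleteNeuron_iff_of_subset hdel]
      by_cases hic : i ∈ c
      · simp [hic, hmem c hic]
      · have : ¬ insert i σ ⊆ c := fun h => hic (h (mem_insert_self i σ))
        simp [hic, this]

namespace IsPiercingWith

lemma notMem_tau (hp : IsPiercingWith C i σ τ) : i ∉ τ := hp.2.1

lemma notMem_sigma (hp : IsPiercingWith C i σ τ) : i ∉ σ := fun h => hp.notMem_tau (hp.1 h)

lemma deleteNeuron_subset (hp : IsPiercingWith C i σ τ) : deleteNeuron C i ⊆ C :=
  (isPiercingWith_iff.mp hp).2.2.1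

lemma mem_iff (hp : IsPiercingWith C i σ τ) (hic : i ∈ c) :
    c ∈ C ↔ insert i σ ⊆ c ∧ c ⊆ insert i τ :=
  (isPiercingWith_iff.mp hp).2.2.2 c hic

lemma insert_sigma_mem (hp : IsPiercingWith C i σ τ) : insert i σ ∈ C :=
  (hp.mem_iff (mem_insert_self i σ)).mpr ⟨subset_rfl, insert_subset_insert i hp.1⟩

lemma insert_tau_mem (hp : IsPiercingWith C i σ τ) : insert i τ ∈ C :=
  (hp.mem_iff (mem_insert_self i τ)).mpr ⟨insert_subset_insert i hp.1, subset_rfl⟩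

lemma not_singleton_empty (hp : IsPiercingWith {∅} i σ τ) : False :=
  insert_ne_empty i σ (mem_singleton.mp hp.insert_sigma_mem)

lemma deleteNeuron (hC : deleteNeuron C i ⊆ C) (hne : i ≠ i')
    (hq : IsPiercingWith C i' σ' τ') : IsPiercingWith (deleteNeuron C i) i' σ' (τ'.erase i) := by
  have hiσ' : i ∉ σ' := by
    have hmem : (insert i' σ').erase i ∈ C :=
      hC (mem_deleteNeuron.mpr ⟨_, hq.insert_sigma_mem, rfl⟩)
    have hsub := ((hq.mem_iff (mem_erase.mpr ⟨hne.symm, mem_insert_self i' σ'⟩)).mp hmem).1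
    exact fun hi => notMem_erase i _ (hsub (mem_insert_of_mem hi))
  obtain ⟨hστ, hiτ, hdel, hmem⟩ := isPiercingWith_iff.mp hq
  refine isPiercingWith_iff.mpr ⟨subset_erase.mpr ⟨hστ, hiσ'⟩,
    fun h => hiτ (mem_of_mem_erase h), fun c hc => ?_, fun c hic => ?_⟩
  · obtain ⟨d, hd, rfl⟩ := mem_deleteNeuron.mp hc
    obtain ⟨hdC, hid⟩ := (mem_deleteNeuron_iff_of_subset hC).mp hd
    exact (mem_deleteNeuron_iff_of_subset hC).mpr
      ⟨hdel (mem_deleteNeuron.mpr ⟨d, hdC, rfl⟩), fun h => hid (mem_of_mem_erase h)⟩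
  · rw [mem_deleteNeuron_iff_of_subset hC, hmem c hic, ← erase_insert_of_ne hne.symm,
      subset_erase]
    tauto


lemma insert_tau_subset (hp : IsPiercingWith C i σ τ) (hq : IsPiercingWith C i' σ' τ')
    (h : i ∈ insert i' τ') : insert i' τ' ⊆ insert i τ :=
  ((hp.mem_iff h).mp hq.insert_tau_mem).2

lemma notMem_sigma_of_isPiercingWith (hp : IsPiercingWith C i σ τ)
    (hq : IsPiercingWith C i' σ' τ') : i ∉ σ' := by
  rcases eq_or_ne i i' with rfl | hne
  · exact hq.notMem_sigma
  · exact fun hi => notMem_erase i τ' ((hq.deleteNeuron hp.deleteNeuron_subset hne).1 hi)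

lemma sigma_subset (hp : IsPiercingWith C i σ τ) (hq : IsPiercingWith C i' σ' τ')
    (h : i' ∈ insert i τ) : σ' ⊆ σ := by
  have hmem : insert i' (insert i σ) ∈ C :=
    (hp.mem_iff (mem_insert_of_mem (mem_insert_self i σ))).mpr
      ⟨subset_insert i' _, insert_subset h (insert_subset_insert i hp.1)⟩
  intro x hx
  have hx' := ((hq.mem_iff (mem_insert_self i' _)).mp hmem).1 (mem_insert_of_mem hx)
  rcases mem_insert.mp hx' with rfl | hx'
  · exact absurd hx hq.notMem_sigma
  rcases mem_insert.mp hx' with rfl | hx'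
  · exact absurd hx (hp.notMem_sigma_of_isPiercingWith hq)
  exact hx'

lemma sigma_eq_and_card_tau_eq (hp : IsPiercingWith C i σ τ) (hq : IsPiercingWith C i' σ' τ')
    (h : i ∈ insert i' τ') : σ = σ' ∧ τ.card = τ'.card := by
  have hτ := hp.insert_tau_subset hq h
  have h' : i' ∈ insert i τ := hτ (mem_insert_self i' τ')
  have hτ_eq := (hq.insert_tau_subset hp h').antisymm hτ
  refine ⟨(hq.sigma_subset hp h).antisymm (hp.sigma_subset hq h'), ?_⟩
  have := congrArg card hτ_eq
  rwa [card_insert_of_notMem hp.notMem_tau, card_insert_of_notMem hq.notMem_tau,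
    Nat.add_right_cancel_iff] at this

end IsPiercingWith

/-- The pair `(k, v) = (|τ| - |σ|, |σ|)` recorded by `j_k` and `j_{k,v}`. -/
def piercingType (σ τ : Finset (Fin n)) : ℕ × ℕ := (τ.card - σ.card, σ.card)

lemma piercingType_exchange (hp : IsPiercingWith C i σ τ) (hq : IsPiercingWith C i' σ' τ')
    (hne : i ≠ i') (M : Multiset (ℕ × ℕ)) :
    piercingType σ τ ::ₘ piercingType σ' (τ'.erase i) ::ₘ M =
      piercingType σ' τ' ::ₘ piercingType σ (τ.erase i') ::ₘ M := by
  by_cases hi : i ∈ τ'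
  · have hi' : i' ∈ τ := by
      simpa [hne.symm] using
        hp.insert_tau_subset hq (mem_insert_of_mem hi) (mem_insert_self i' τ')
    obtain ⟨rfl, hcard⟩ := hp.sigma_eq_and_card_tau_eq hq (mem_insert_of_mem hi)
    simp only [piercingType, card_erase_of_mem hi, card_erase_of_mem hi', hcard]
  · have hi' : i' ∉ τ := fun hi' => hi <| by
      simpa [hne] using hq.insert_tau_subset hp (mem_insert_of_mem hi') (mem_insert_self i τ)
    rw [erase_eq_of_notMem hi, erase_eq_of_notMem hi', Multiset.cons_swap]

/-- `HasPiercingProfile C M`: the code `C` is obtained from `{∅}` by a sequence of piercings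
whose types form the multiset `M`. -/
inductive HasPiercingProfile : Finset (Finset (Fin n)) → Multiset (ℕ × ℕ) → Prop
  | singleton_empty : HasPiercingProfile {∅} 0
  | pierce {C : Finset (Finset (Fin n))} (i : Fin n) (σ τ : Finset (Fin n))
      {M : Multiset (ℕ × ℕ)} :
      IsPiercingWith C i σ τ → HasPiercingProfile (deleteNeuron C i) M →
        HasPiercingProfile C (piercingType σ τ ::ₘ M)

namespace HasPiercingProfile

lemma exists_eq_cons {M : Multiset (ℕ × ℕ)} (h : HasPiercingProfile C M)
    (hp : IsPiercingWith C i σ τ) :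
    ∃ M₀, HasPiercingProfile (deleteNeuron C i) M₀ ∧ M = piercingType σ τ ::ₘ M₀ := by
  induction h generalizing i σ τ with
  | singleton_empty => exact hp.not_singleton_empty.elim
  | @pierce C j σj τj M hq hM ih =>
    rcases eq_or_ne i j with rfl | hne
    · obtain ⟨rfl, hcard⟩ := hp.sigma_eq_and_card_tau_eq hq (mem_insert_self i τj)
      exact ⟨M, hM, by simp only [piercingType, hcard]⟩
    · obtain ⟨M₀, hM₀, rfl⟩ := ih (hp.deleteNeuron hq.deleteNeuron_subset hne.symm)
      rw [deleteNeuron_comm] at hM₀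
      exact ⟨_, pierce j σj (τj.erase i) (hq.deleteNeuron hp.deleteNeuron_subset hne) hM₀,
        piercingType_exchange hq hp hne.symm M₀⟩

lemma unique {M M' : Multiset (ℕ × ℕ)} (h : HasPiercingProfile C M)
    (h' : HasPiercingProfile C M') : M = M' := by
  induction h generalizing M' with
  | singleton_empty =>
    cases h' with
    | singleton_empty => rfl
    | pierce i σ τ hp _ => exact hp.not_singleton_empty.elim
  | pierce i σ τ hp _ ih =>
    obtain ⟨M₀, hM₀, rfl⟩ := h'.exists_eq_cons hp
    rw [ih hM₀]

lemma of_chain {m : ℕ} {D : ℕ → Finset (Finset (Fin n))} {x : Fin m → Fin n}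
    {s u : Fin m → Finset (Fin n)} (h₀ : D 0 = {∅})
    (hpierce : ∀ j : Fin m, IsPiercingWith (D (j + 1)) (x j) (s j) (u j))
    (hdelete : ∀ j : Fin m, deleteNeuron (D (j + 1)) (x j) = D j) :
    HasPiercingProfile (D m) (univ.val.map fun j => piercingType (s j) (u j)) := by
  induction m with
  | zero => simpa [h₀] using singleton_empty
  | succ m ih =>
    have hprev := ih (x := x ∘ Fin.castSucc) (s := s ∘ Fin.castSucc) (u := u ∘ Fin.castSucc)
      (fun j => hpierce j.castSucc) (fun j => hdelete j.castSucc)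
    rw [Fin.univ_castSuccEmb, cons_val, Multiset.map_cons, map_val, Multiset.map_map]
    refine pierce _ _ _ (hpierce (Fin.last m)) ?_
    convert hprev using 1
    · exact hdelete (Fin.last m)
    · rfl

end HasPiercingProfile

def laterNeurons (e : Fin n ≃ Fin n) (t : ℕ) : Finset (Fin n) :=
  univ.filter fun i => t ≤ (e.symm i : ℕ)

lemma laterNeurons_zero (e : Fin n ≃ Fin n) : laterNeurons e 0 = univ := by
  simp [laterNeurons]

lemma laterNeurons_self (e : Fin n ≃ Fin n) : laterNeurons e n = ∅ := by
  simp [laterNeurons, Fin.is_lt]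

lemma insert_laterNeurons_succ (e : Fin n ≃ Fin n) (j : Fin n) :
    insert (e j) (laterNeurons e (j + 1)) = laterNeurons e j := by
  ext i
  simp only [laterNeurons, mem_insert, mem_filter, mem_univ, true_and, ← e.symm_apply_eq,
    Fin.ext_iff]
  omega

lemma filter_exists_lt_eq_laterNeurons (e : Fin n ≃ Fin n) (j : Fin n) :
    univ.filter (fun i => ∃ m : Fin n, j < m ∧ e m = i) = laterNeurons e (j + 1) := by
  ext i
  simp only [laterNeurons, mem_filter, mem_univ, true_and, Nat.add_one_le_iff, Fin.val_fin_lt]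
  exact ⟨fun ⟨m, hm, he⟩ => he ▸ by simpa using hm, fun h => ⟨_, h, e.apply_symm_apply i⟩⟩

namespace PiercingOrder

def profile (P : PiercingOrder C) : Multiset (ℕ × ℕ) :=
  univ.val.map fun j => piercingType (P.sig j) (P.tau j)

lemma hasPiercingProfile (P : PiercingOrder C) (hC : C.Nonempty) :
    HasPiercingProfile C P.profile := by
  have := HasPiercingProfile.of_chain (D := fun t => deleteSet C (laterNeurons P.ord t))
    (by rw [laterNeurons_zero, deleteSet_univ hC])
    (fun j => filter_exists_lt_eq_laterNeurons P.ord j ▸ P.piercing j)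
    (fun j => by rw [deleteNeuron_deleteSet, insert_laterNeurons_succ])
  rwa [laterNeurons_self, deleteSet_empty] at this

lemma jnum_eq_countP (P : PiercingOrder C) (k : ℕ) :
    P.jnum k = P.profile.countP fun x => x.1 = k := by
  rw [profile, Multiset.countP_map]; rfl

lemma jnum2_eq_countP (P : PiercingOrder C) (k v : ℕ) :
    P.jnum2 k v = P.profile.countP fun x => x.1 = k ∧ x.2 = v := by
  rw [profile, Multiset.countP_map]; rfl

end PiercingOrder

end PiercingInvariance

theorem piercing_numbers_order_independent_general {n : ℕ}
    (C : Finset (Finset (Fin n))) (hC : ∅ ∈ C)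
    (P P' : PiercingOrder C) :
    ∀ k v : ℕ, P.jnum k = P'.jnum k ∧ P.jnum2 k v = P'.jnum2 k v := by
  have hprofile : P.profile = P'.profile :=
    (P.hasPiercingProfile ⟨∅, hC⟩).unique (P'.hasPiercingProfile ⟨∅, hC⟩)
  intro k v
  simp only [PiercingOrder.jnum_eq_countP, PiercingOrder.jnum2_eq_countP, hprofile, and_self]

/-- The piercing numbers `j_k` and `j_{k,v}` of an inductively pierced
code are independent of the choice of piercing order. -/
theorem piercing_numbers_order_independent {n : ℕ}
    (C : Finset (Finset (Fin n))) (hC : ∅ ∈ C)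
    (hip : InductivelyPierced C) (P P' : PiercingOrder C) :
    ∀ k v : ℕ, P.jnum k = P'.jnum k ∧ P.jnum2 k v = P'.jnum2 k v :=
  piercing_numbers_order_independent_general C hC P P'
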